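/- arXiv:1805.08186 — 4 statements merged into one kernel-verified Lean document; each statement's English description precedes it below -/
import Mathlib

section
/- If a multilinear polynomial F over F2 factors as F = F1 · F2 with F1, F2 nonconstant, then F1 and F2 depend on disjoint sets of variables. -/
open MvPolynomial

/-- Substitute the value `a` for the variable `x`. -/
noncomputable def subAt {n : ℕ} (x : Fin n) (a : ZMod 2)
    (F : MvPolynomial (Fin n) (ZMod 2)) : MvPolynomial (Fin n) (ZMod 2) :=
  MvPolynomial.bind₁ (fun i => if i = x then MvPolynomial.C a else MvPolynomial.X i) F

/-- Formal derivative of a multilinear polynomial: ∂F/∂x = F_{x=0} + F_{x=1}. -/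
noncomputable def fder {n : ℕ} (x : Fin n) (F : MvPolynomial (Fin n) (ZMod 2)) :
    MvPolynomial (Fin n) (ZMod 2) :=
  subAt x 0 F + subAt x 1 F

/-- A polynomial is multilinear if every variable occurs with degree ≤ 1 in every monomial. -/
def Multilinear {n : ℕ} (F : MvPolynomial (Fin n) (ZMod 2)) : Prop :=
  ∀ m ∈ F.support, ∀ i, m i ≤ 1


lemma deg0_mul {m : ℕ} (f g : MvPolynomial (Fin (m+1)) (ZMod 2)) (hf : f ≠ 0) (hg : g ≠ 0) :
    MvPolynomial.degreeOf 0 (f * g) = MvPolynomial.degreeOf 0 f + MvPolynomial.degreeOf 0 g := by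
  rw [← natDegree_finSuccEquiv, ← natDegree_finSuccEquiv, ← natDegree_finSuccEquiv, map_mul,
    Polynomial.natDegree_mul]
  · simpa using hf
  · simpa using hg

lemma mem_vars_deg {n : ℕ} {a : Fin n} {f : MvPolynomial (Fin n) (ZMod 2)} (h : a ∈ f.vars) :
    1 ≤ MvPolynomial.degreeOf a f := by
  rw [mem_vars] at h
  obtain ⟨d, hd, had⟩ := h
  rw [degreeOf_eq_sup]
  calc 1 ≤ d a := Finsupp.mem_support_iff.mp had |>.bot_lt
    _ ≤ _ := Finset.le_sup (f := fun m => m a) hd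

theorem stmt_0 {n : ℕ} (F F1 F2 : MvPolynomial (Fin n) (ZMod 2))
    (hML : Multilinear F) (hfac : F = F1 * F2)
    (h1 : ∀ c : ZMod 2, F1 ≠ MvPolynomial.C c)
    (h2 : ∀ c : ZMod 2, F2 ≠ MvPolynomial.C c) :
    Disjoint F1.vars F2.vars :=  by
  rw [Finset.disjoint_left]
  intro a ha1 ha2
  rcases n with _ | m
  · exact a.elim0
  have hinj : Function.Injective (Equiv.swap a 0) := (Equiv.swap a 0).injective
  have hrinj := rename_injective (R := ZMod 2) _ hinj
  have hF1 : F1 ≠ 0 := fun h => h1 0 (by simpa using h)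
  have hF2 : F2 ≠ 0 := fun h => h2 0 (by simpa using h)
  have key : degreeOf 0 (rename (Equiv.swap a 0) F) =
      degreeOf 0 (rename (Equiv.swap a 0) F1) + degreeOf 0 (rename (Equiv.swap a 0) F2) := by
    rw [hfac, map_mul]
    exact deg0_mul _ _ (fun h => hF1 (hrinj (by simpa using h)))
      (fun h => hF2 (hrinj (by simpa using h)))
  have e0 : (Equiv.swap a 0) a = 0 := Equiv.swap_apply_left a 0
  have r1 := degreeOf_rename_of_injective hinj (p := F1) a
  have r2 := degreeOf_rename_of_injective hinj (p := F2) a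
  have rF := degreeOf_rename_of_injective hinj (p := F) a
  rw [e0] at r1 r2 rF
  have d1 : 1 ≤ degreeOf a F1 := mem_vars_deg ha1
  have d2 : 1 ≤ degreeOf a F2 := mem_vars_deg ha2
  have dF : degreeOf a F ≤ 1 := by
    rw [degreeOf_eq_sup]
    exact Finset.sup_le fun m hm => hML m hm a
  omega
end

section
/- Let A1, A2, B1, B2, C1, C2, D1, D2 be polynomials over F2 with A1 ≠ 0, A2 ≠ 0, satisfying A1·D1 = B1·C1 and A2·D2 = B2·C2. Then A1·D2 + A2·D1 = B1·C2 + B2·C1 if and only if (A1·B2 = A2·B1 or A1·C2 = A2·C1). -/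
theorem stmt_10 {n : ℕ} (A1 A2 B1 B2 C1 C2 D1 D2 : MvPolynomial (Fin n) (ZMod 2))
    (hA1 : A1 ≠ 0) (hA2 : A2 ≠ 0)
    (h1 : A1 * D1 = B1 * C1) (h2 : A2 * D2 = B2 * C2) :
    A1 * D2 + A2 * D1 = B1 * C2 + B2 * C1
      ↔ (A1 * B2 = A2 * B1 ∨ A1 * C2 = A2 * C1) := by
  have htwo : (2 : MvPolynomial (Fin n) (ZMod 2)) = 0 := CharTwo.two_eq_zero
  have hA12 : A1 * A2 ≠ 0 := mul_ne_zero hA1 hA2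
  constructor
  · intro h
    have key : (A1 * B2 + A2 * B1) * (A1 * C2 + A2 * C1) = 0 := by
      linear_combination A1 ^ 2 * h2 + A2 ^ 2 * h1 + A1 * A2 * h +
        (A1 * A2 * (B1 * C2 + B2 * C1) + A1 ^ 2 * B2 * C2 - A1 ^ 2 * A2 * D2
          + A2 ^ 2 * B1 * C1 - A1 * A2 ^ 2 * D1) * htwo
    rcases mul_eq_zero.mp key with h' | h'
    · left
      rw [← sub_eq_zero, CharTwo.sub_eq_add]
      exact h'
    · right
      rw [← sub_eq_zero, CharTwo.sub_eq_add]
      exact h'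
  · rintro (hb | hc)
    · apply mul_left_cancel₀ hA12
      linear_combination A1 ^ 2 * h2 + A2 ^ 2 * h1 + (A1 * C2 - A2 * C1) * hb
    · apply mul_left_cancel₀ hA12
      linear_combination A1 ^ 2 * h2 + A2 ^ 2 * h1 + (A1 * B2 - A2 * B1) * hc
end

section
/- Let F be a multilinear polynomial over F2 with M monomials such that no variable divides F, and for each variable x let μ_x be the number of monomials of F containing x. If F is factorable (F = G·H with G, H nonconstant over disjoint variable sets), then for every variable x of F, gcd(μ_x, M) > 1. -/
/-!
If `G` and `H` have disjoint variables, the monomials of `G * H` are exactly the sums `a + b` of a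
monomial `a` of `G` and a monomial `b` of `H`, and distinct pairs give distinct sums. Hence
`M = M_G * M_H` and, for a variable `x` of `G`, `μ_x = μ_x(G) * M_H`, so `M_H` divides
`gcd(μ_x, M)`. A nonconstant polynomial not divisible by any variable is not a monomial, so
`M_H ≥ 2`.
-/

open MvPolynomial

theorem Finsupp.eq_and_eq_of_add_eq_add {ι M : Type*} [AddZeroClass M] {S T : Finset ι}
    (hST : Disjoint S T) {a a' b b' : ι →₀ M} (ha : a.support ⊆ S) (ha' : a'.support ⊆ S)
    (hb : b.support ⊆ T) (hb' : b'.support ⊆ T) (h : a + b = a' + b') : a = a' ∧ b = b' := by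
  have hi (i : ι) : a i + b i = a' i + b' i := by rw [← Finsupp.add_apply, h, Finsupp.add_apply]
  have zero_of_notMem {f : ι →₀ M} {U : Finset ι} (hf : f.support ⊆ U) {i : ι} (hi : i ∉ U) :
      f i = 0 := Finsupp.notMem_support_iff.mp fun h => hi (hf h)
  constructor <;> ext i <;> specialize hi i
  · by_cases hiS : i ∈ S
    · have hiT : i ∉ T := Finset.disjoint_left.mp hST hiS
      simpa [zero_of_notMem hb hiT, zero_of_notMem hb' hiT] using hi
    · rw [zero_of_notMem ha hiS, zero_of_notMem ha' hiS]
  · by_cases hiS : i ∈ S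
    · have hiT : i ∉ T := Finset.disjoint_left.mp hST hiS
      rw [zero_of_notMem hb hiT, zero_of_notMem hb' hiT]
    · simpa [zero_of_notMem ha hiS, zero_of_notMem ha' hiS] using hi

open scoped Pointwise

namespace MvPolynomial

variable {σ R : Type*} [CommSemiring R] {G H : MvPolynomial σ R}

theorem injOn_add_support_of_disjoint_vars (hdisj : Disjoint G.vars H.vars) :
    Set.InjOn (fun p : (σ →₀ ℕ) × (σ →₀ ℕ) => p.1 + p.2) ↑(G.support ×ˢ H.support) := by
  rintro ⟨a, b⟩ hab ⟨a', b'⟩ hab' h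
  simp only [Finset.coe_product, Set.mem_prod, Finset.mem_coe] at hab hab'
  obtain ⟨rfl, rfl⟩ := Finsupp.eq_and_eq_of_add_eq_add hdisj
    (support_subset_vars_of_mem_support hab.1) (support_subset_vars_of_mem_support hab'.1)
    (support_subset_vars_of_mem_support hab.2) (support_subset_vars_of_mem_support hab'.2) h
  rfl

theorem coeff_add_mul_of_disjoint_vars (hdisj : Disjoint G.vars H.vars) {a b : σ →₀ ℕ}
    (ha : a ∈ G.support) (hb : b ∈ H.support) :
    coeff (a + b) (G * H) = coeff a G * coeff b H := by
  classical
  rw [coeff_mul, Finset.sum_eq_single (a, b)]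
  · rintro ⟨u, v⟩ huv hne
    rw [Finset.HasAntidiagonal.mem_antidiagonal] at huv
    by_contra hne0
    have hu : u ∈ G.support := mem_support_iff.mpr (left_ne_zero_of_mul hne0)
    have hv : v ∈ H.support := mem_support_iff.mpr (right_ne_zero_of_mul hne0)
    exact hne (injOn_add_support_of_disjoint_vars hdisj (by simp [hu, hv]) (by simp [ha, hb]) huv)
  · simp

theorem support_mul_of_disjoint_vars [DecidableEq σ] [NoZeroDivisors R]
    (hdisj : Disjoint G.vars H.vars) : (G * H).support = G.support + H.support := by
  refine (support_mul G H).antisymm fun m hm => ?_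
  obtain ⟨a, ha, b, hb, rfl⟩ := Finset.mem_add.mp hm
  rw [mem_support_iff, coeff_add_mul_of_disjoint_vars hdisj ha hb]
  exact mul_ne_zero (mem_support_iff.mp ha) (mem_support_iff.mp hb)

theorem card_support_mul_of_disjoint_vars [NoZeroDivisors R] (hdisj : Disjoint G.vars H.vars) :
    (G * H).support.card = G.support.card * H.support.card := by
  classical
  rw [support_mul_of_disjoint_vars hdisj, Finset.add_def,
    Finset.card_image_of_injOn (injOn_add_support_of_disjoint_vars hdisj), Finset.card_product]

theorem card_filter_support_mul_of_disjoint_vars [NoZeroDivisors R]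
    (hdisj : Disjoint G.vars H.vars) {x : σ} (hx : x ∉ H.vars) :
    ((G * H).support.filter fun m => m x ≠ 0).card
      = (G.support.filter fun a => a x ≠ 0).card * H.support.card := by
  classical
  have hfilter : ((G.support ×ˢ H.support).filter fun p => (p.1 + p.2) x ≠ 0)
      = (G.support.filter fun a => a x ≠ 0) ×ˢ H.support := by
    rw [← Finset.filter_product_left]
    refine Finset.filter_congr fun p hp => ?_
    simp [mem_support_notMem_vars_zero (Finset.mem_product.mp hp).2 hx]
  rw [support_mul_of_disjoint_vars hdisj, Finset.add_def, Finset.filter_image, hfilter,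
    Finset.card_image_of_injOn, Finset.card_product]
  exact (injOn_add_support_of_disjoint_vars hdisj).mono
    (Finset.coe_subset.mpr (Finset.product_subset_product_left (Finset.filter_subset _ _)))

theorem two_le_card_support (hnc : ∀ c : R, H ≠ C c) (hnodiv : ∀ z : σ, ¬ X z ∣ H) :
    2 ≤ H.support.card := by
  by_contra! h
  interval_cases hcard : H.support.card
  · exact hnc 0 (by simpa using hcard)
  · obtain ⟨d, hd⟩ := Finset.card_eq_one.mp hcard
    have hH : H = monomial d (coeff d H) := by
      conv_lhs => rw [as_sum H, hd, Finset.sum_singleton]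
    obtain ⟨z, hz⟩ : d.support.Nonempty := by
      refine Finsupp.support_nonempty_iff.mpr fun hd0 => hnc (coeff d H) ?_
      subst hd0
      exact hH.trans C_apply.symm
    exact hnodiv z (hH ▸ X_dvd_monomial.mpr (Or.inr (Finsupp.mem_support_iff.mp hz)))

theorem card_support_dvd_gcd_of_disjoint_vars [NoZeroDivisors R]
    (hdisj : Disjoint G.vars H.vars) {x : σ} (hx : x ∉ H.vars) :
    H.support.card ∣
      Nat.gcd ((G * H).support.filter fun m => m x ≠ 0).card (G * H).support.card :=
  Nat.dvd_gcd
    ⟨_, by rw [card_filter_support_mul_of_disjoint_vars hdisj hx, mul_comm]⟩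
    ⟨_, by rw [card_support_mul_of_disjoint_vars hdisj, mul_comm]⟩

theorem one_lt_gcd_card_of_disjoint_vars [NoZeroDivisors R] (hdisj : Disjoint G.vars H.vars)
    (hGH : G * H ≠ 0) (hH : 2 ≤ H.support.card) {x : σ} (hx : x ∉ H.vars) :
    1 < Nat.gcd ((G * H).support.filter fun m => m x ≠ 0).card (G * H).support.card := by
  have hpos : 0 < (G * H).support.card :=
    Finset.card_pos.mpr (Finset.nonempty_iff_ne_empty.mpr (mt support_eq_empty.mp hGH))
  exact hH.trans (Nat.le_of_dvd (Nat.gcd_pos_of_pos_right _ hpos)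
    (card_support_dvd_gcd_of_disjoint_vars hdisj hx))

end MvPolynomial

theorem stmt_11_general {n : ℕ} (F G H : MvPolynomial (Fin n) (ZMod 2))
    (hnodiv : ∀ z : Fin n, ¬ MvPolynomial.X z ∣ F)
    (hfac : F = G * H) (hdisj : Disjoint G.vars H.vars)
    (hGnc : ∀ c : ZMod 2, G ≠ MvPolynomial.C c)
    (hHnc : ∀ c : ZMod 2, H ≠ MvPolynomial.C c) :
    ∀ x ∈ F.vars,
      1 < Nat.gcd ((F.support.filter (fun m => m x ≠ 0)).card) F.support.card := by
  intro x hx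
  subst hfac
  have hGH : G * H ≠ 0 := fun h => by simp [h] at hx
  rcases Finset.mem_union.mp (vars_mul G H hx) with hxG | hxH
  · have hH := two_le_card_support hHnc fun z hz => hnodiv z (hz.trans (dvd_mul_left H G))
    exact one_lt_gcd_card_of_disjoint_vars hdisj hGH hH (Finset.disjoint_left.mp hdisj hxG)
  · have hG := two_le_card_support hGnc fun z hz => hnodiv z (hz.trans (dvd_mul_right G H))
    rw [mul_comm G H] at hGH ⊢
    exact one_lt_gcd_card_of_disjoint_vars hdisj.symm hGH hG (Finset.disjoint_right.mp hdisj hxH)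

theorem stmt_11 {n : ℕ} (F G H : MvPolynomial (Fin n) (ZMod 2))
    (hML : Multilinear F)
    (hnodiv : ∀ z : Fin n, ¬ MvPolynomial.X z ∣ F)
    (hfac : F = G * H) (hdisj : Disjoint G.vars H.vars)
    (hGnc : ∀ c : ZMod 2, G ≠ MvPolynomial.C c)
    (hHnc : ∀ c : ZMod 2, H ≠ MvPolynomial.C c) :
    ∀ x ∈ F.vars,
      1 < Nat.gcd ((F.support.filter (fun m => m x ≠ 0)).card) F.support.card :=
  stmt_11_general F G H hnodiv hfac hdisj hGnc hHnc
end

section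
/- The characteristic equation (3/4)^p + (1/4)^p + (1/2)^p + (1/2)^p = 1 has a unique real solution p, and this solution satisfies 2.22 < p < 2.23. -/
open Real Set

private lemma rpow_lt_of_pow {x : ℝ} (hx : 0 < x) (a b : ℕ) (hb : b ≠ 0) {c : ℝ} (hc : 0 < c)
    (h : x ^ a < c ^ b) : x ^ ((a : ℝ) / b) < c := by
  have key : (x ^ ((a : ℝ) / b)) ^ b < c ^ b := by
    rw [← Real.rpow_natCast (x ^ ((a : ℝ) / b)) b, ← Real.rpow_mul hx.le]
    have : (a : ℝ) / b * b = (a : ℕ) := by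
      field_simp
    rw [this, Real.rpow_natCast]
    exact h
  exact lt_of_pow_lt_pow_left₀ b hc.le key

private lemma lt_rpow_of_pow {x : ℝ} (hx : 0 < x) (a b : ℕ) (hb : b ≠ 0) {c : ℝ} (hc : 0 < c)
    (h : c ^ b < x ^ a) : c < x ^ ((a : ℝ) / b) := by
  have key : c ^ b < (x ^ ((a : ℝ) / b)) ^ b := by
    rw [← Real.rpow_natCast (x ^ ((a : ℝ) / b)) b, ← Real.rpow_mul hx.le]
    have : (a : ℝ) / b * b = (a : ℕ) := by
      field_simp
    rw [this, Real.rpow_natCast]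
    exact h
  exact lt_of_pow_lt_pow_left₀ b (Real.rpow_nonneg hx.le _) key

noncomputable def fchar (p : ℝ) : ℝ :=
  ((3:ℝ)/4) ^ p + ((1:ℝ)/4) ^ p + ((1:ℝ)/2) ^ p + ((1:ℝ)/2) ^ p

private lemma fchar_anti : StrictAnti fchar := by
  intro x y hxy
  unfold fchar
  have h1 := Real.rpow_lt_rpow_of_exponent_gt (by norm_num : (0:ℝ) < 3/4) (by norm_num) hxy
  have h2 := Real.rpow_lt_rpow_of_exponent_gt (by norm_num : (0:ℝ) < 1/4) (by norm_num) hxy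
  have h3 := Real.rpow_lt_rpow_of_exponent_gt (by norm_num : (0:ℝ) < 1/2) (by norm_num) hxy
  linarith

private lemma fchar_cont : Continuous fchar := by
  unfold fchar
  have h : ∀ c : ℝ, 0 < c → Continuous (fun p : ℝ => c ^ p) := by
    intro c hc
    have : (fun p : ℝ => c ^ p) = fun p => Real.exp (Real.log c * p) := by
      funext p
      rw [Real.rpow_def_of_pos hc]
    rw [this]
    exact Real.continuous_exp.comp (continuous_const.mul continuous_id)
  exact (((h _ (by norm_num)).add (h _ (by norm_num))).add (h _ (by norm_num))).add
    (h _ (by norm_num))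

private lemma fchar_222 : 1 < fchar 2.22 := by
  unfold fchar
  have e : (2.22 : ℝ) = (111 : ℕ) / (50 : ℕ) := by norm_num
  rw [e]
  have h2 : (46/1000 : ℝ) < ((1:ℝ)/4) ^ (((111 : ℕ) : ℝ) / ((50:ℕ) : ℝ)) :=
    lt_rpow_of_pow (by norm_num) 111 50 (by norm_num) (by norm_num) (by norm_num)
  have h3 : (2145/10000 : ℝ) < ((1:ℝ)/2) ^ (((111 : ℕ) : ℝ) / ((50:ℕ) : ℝ)) :=
    lt_rpow_of_pow (by norm_num) 111 50 (by norm_num) (by norm_num) (by norm_num)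
  have h1' : (528/1000 : ℝ) < ((3:ℝ)/4) ^ (((111 : ℕ) : ℝ) / ((50:ℕ) : ℝ)) :=
    lt_rpow_of_pow (by norm_num) 111 50 (by norm_num) (by norm_num) (by norm_num)
  push_cast at h1' h2 h3 ⊢
  linarith

private lemma fchar_223 : fchar 2.23 < 1 := by
  unfold fchar
  have e : (2.23 : ℝ) = (223 : ℕ) / (100 : ℕ) := by norm_num
  rw [e]
  have h1 : ((3:ℝ)/4) ^ (((223 : ℕ) : ℝ) / ((100:ℕ) : ℝ)) < 5265/10000 :=
    rpow_lt_of_pow (by norm_num) 223 100 (by norm_num) (by norm_num) (by norm_num)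
  have h2 : ((1:ℝ)/4) ^ (((223 : ℕ) : ℝ) / ((100:ℕ) : ℝ)) < 455/10000 :=
    rpow_lt_of_pow (by norm_num) 223 100 (by norm_num) (by norm_num) (by norm_num)
  have h3 : ((1:ℝ)/2) ^ (((223 : ℕ) : ℝ) / ((100:ℕ) : ℝ)) < 2132/10000 :=
    rpow_lt_of_pow (by norm_num) 223 100 (by norm_num) (by norm_num) (by norm_num)
  push_cast at h1 h2 h3 ⊢
  linarith

theorem stmt_15 :
    (∃! p : ℝ, ((3:ℝ)/4) ^ p + ((1:ℝ)/4) ^ p + ((1:ℝ)/2) ^ p + ((1:ℝ)/2) ^ p = 1) ∧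
    (∀ p : ℝ, ((3:ℝ)/4) ^ p + ((1:ℝ)/4) ^ p + ((1:ℝ)/2) ^ p + ((1:ℝ)/2) ^ p = 1 →
      2.22 < p ∧ p < 2.23) := by
  have hmem : (1:ℝ) ∈ Icc (fchar 2.23) (fchar 2.22) := ⟨fchar_223.le, fchar_222.le⟩
  have hsub := intermediate_value_Icc' (by norm_num : (2.22:ℝ) ≤ 2.23)
    fchar_cont.continuousOn
  obtain ⟨p₀, _, hp₀⟩ := hsub hmem
  have bounds : ∀ p : ℝ, fchar p = 1 → 2.22 < p ∧ p < 2.23 := by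
    intro p hp
    constructor
    · by_contra h
      push_neg at h
      have : fchar 2.22 ≤ fchar p := fchar_anti.antitone h
      rw [hp] at this
      linarith [fchar_222]
    · by_contra h
      push_neg at h
      have : fchar p ≤ fchar 2.23 := fchar_anti.antitone h
      rw [hp] at this
      linarith [fchar_223]
  refine ⟨⟨p₀, hp₀, ?_⟩, bounds⟩
  intro q hq
  exact fchar_anti.injective (hq.trans hp₀.symm)
end
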